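/- arXiv:1802.09792 — 8 statements merged into one kernel-verified Lean document; each statement's English description precedes it below -/
import Mathlib

section
/- The midpoint solution is an N-approximation for the min-max robust combinatorial optimization problem: if x̂ minimizes ĉ·x over X where ĉ = (1/N)∑_{i∈[N]} cⁱ, then max_{i∈[N]} cⁱ·x̂ ≤ N · min_{x∈X} max_{i∈[N]} cⁱ·x. -/
open Finset

/-- The robust (worst-case) objective value of a solution `x` over `N` scenarios. -/
noncomputable def maxCost {n N : ℕ} (hN : 0 < N) (c : Fin N → Fin n → ℝ) (x : Fin n → ℝ) : ℝ :=
  Finset.univ.sup' (Finset.univ_nonempty_iff.mpr (Fin.pos_iff_nonempty.mp hN))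
    fun i => ∑ j, c i j * x j

/-- The midpoint solution is an `N`-approximation for min-max robust optimization. -/
theorem midpoint_N_approx {n N : ℕ} (hN : 0 < N)
    (X : Finset (Fin n → ℝ)) (hXne : X.Nonempty)
    (hX01 : ∀ x ∈ X, ∀ j, x j = 0 ∨ x j = 1)
    (c : Fin N → Fin n → ℝ) (hc : ∀ i j, 0 ≤ c i j)
    (chat : Fin n → ℝ) (hchat : ∀ j, chat j = (1 / (N : ℝ)) * ∑ i, c i j)
    (xhat : Fin n → ℝ) (hxhatX : xhat ∈ X)
    (hmin : ∀ x ∈ X, ∑ j, chat j * xhat j ≤ ∑ j, chat j * x j) :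
    maxCost hN c xhat ≤ (N : ℝ) * X.inf' hXne (fun x => maxCost hN c x) := by
  have hNpos : (0:ℝ) < N := Nat.cast_pos.mpr hN
  -- key: for each x ∈ X (with 0/1 entries), maxCost xhat ≤ N * maxCost x
  have key : ∀ x ∈ X, maxCost hN c xhat ≤ (N:ℝ) * maxCost hN c x := by
    intro x hx
    have hxnn : ∀ j, 0 ≤ x j := by
      intro j; rcases hX01 x hx j with h | h <;> simp [h]
    have hxhnn : ∀ j, 0 ≤ xhat j := by
      intro j; rcases hX01 xhat hxhatX j with h | h <;> simp [h]
    -- chat dot y = (1/N) * ∑ i, cⁱ·y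
    have hdot : ∀ y : Fin n → ℝ, ∑ j, chat j * y j
        = (1/(N:ℝ)) * ∑ i, ∑ j, c i j * y j := by
      intro y
      rw [Finset.sum_comm]
      rw [Finset.mul_sum]
      refine Finset.sum_congr rfl fun j _ => ?_
      rw [hchat j, mul_assoc, Finset.sum_mul]
    apply Finset.sup'_le
    intro i _
    have h1 : ∑ j, c i j * xhat j ≤ ∑ k, ∑ j, c k j * xhat j := by
      apply Finset.single_le_sum (f := fun k => ∑ j, c k j * xhat j)
      · intro k _
        exact Finset.sum_nonneg fun j _ => mul_nonneg (hc k j) (hxhnn j)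
      · exact Finset.mem_univ i
    have h2 : ∑ k, ∑ j, c k j * xhat j = (N:ℝ) * ∑ j, chat j * xhat j := by
      rw [hdot]; field_simp
    have h3 : (N:ℝ) * ∑ j, chat j * xhat j ≤ (N:ℝ) * ∑ j, chat j * x j :=
      mul_le_mul_of_nonneg_left (hmin x hx) hNpos.le
    have h4 : ∑ j, chat j * x j ≤ maxCost hN c x := by
      rw [hdot]
      have hsum : ∑ k, ∑ j, c k j * x j ≤ (N:ℝ) * maxCost hN c x := by
        calc ∑ k, ∑ j, c k j * x j
            ≤ ∑ _k : Fin N, maxCost hN c x :=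
              Finset.sum_le_sum fun k _ =>
                Finset.le_sup' (fun i => ∑ j, c i j * x j) (Finset.mem_univ k)
          _ = (N:ℝ) * maxCost hN c x := by simp [Finset.sum_const, mul_comm]
      calc (1/(N:ℝ)) * ∑ k, ∑ j, c k j * x j
          ≤ (1/(N:ℝ)) * ((N:ℝ) * maxCost hN c x) := by
            apply mul_le_mul_of_nonneg_left hsum
            positivity
        _ = maxCost hN c x := by field_simp
    calc ∑ j, c i j * xhat j ≤ (N:ℝ) * ∑ j, chat j * xhat j := h2 ▸ h1
      _ ≤ (N:ℝ) * ∑ j, chat j * x j := h3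
      _ ≤ (N:ℝ) * maxCost hN c x := mul_le_mul_of_nonneg_left h4 hNpos.le
  obtain ⟨x₀, hx₀, hx₀eq⟩ := Finset.exists_mem_eq_inf' hXne (fun x => maxCost hN c x)
  rw [hx₀eq]
  exact key x₀ hx₀
end

section
/- The element-wise worst-case solution is an N-approximation for the min-max robust combinatorial optimization problem: if x̄ minimizes c̄·x over X where c̄_j = max_{i∈[N]} cⁱ_j, then max_{i∈[N]} cⁱ·x̄ ≤ N · min_{x∈X} max_{i∈[N]} cⁱ·x. -/
open Finset

theorem ewwc_N_approx {n N : ℕ} (hN : 0 < N)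
    (X : Finset (Fin n → ℝ)) (hXne : X.Nonempty)
    (hX01 : ∀ x ∈ X, ∀ j, x j = 0 ∨ x j = 1)
    (c : Fin N → Fin n → ℝ) (hc : ∀ i j, 0 ≤ c i j)
    (cbar : Fin n → ℝ)
    (hcbar : ∀ j, cbar j = Finset.univ.sup'
      (Finset.univ_nonempty_iff.mpr (Fin.pos_iff_nonempty.mp hN)) (fun i => c i j))
    (xbar : Fin n → ℝ) (hxbarX : xbar ∈ X)
    (hmin : ∀ x ∈ X, ∑ j, cbar j * xbar j ≤ ∑ j, cbar j * x j) :
    maxCost hN c xbar ≤ (N : ℝ) * X.inf' hXne (fun x => maxCost hN c x) := by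
  obtain ⟨x, hxX, hx⟩ := X.exists_mem_eq_inf' hXne (fun x => maxCost hN c x)
  have hne := Finset.univ_nonempty_iff.mpr (Fin.pos_iff_nonempty.mp hN)
  have hx0 : ∀ z ∈ X, ∀ j, 0 ≤ z j := by
    intro z hz j; rcases hX01 z hz j with h | h <;> rw [h] <;> norm_num
  have h1 : maxCost hN c xbar ≤ ∑ j, cbar j * xbar j := by
    apply Finset.sup'_le
    intro i _
    apply Finset.sum_le_sum
    intro j _
    exact mul_le_mul_of_nonneg_right
      (by rw [hcbar j]; exact Finset.le_sup' (fun i => c i j) (Finset.mem_univ i))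
      (hx0 xbar hxbarX j)
  have h2 : ∑ j, cbar j * x j ≤ (N : ℝ) * maxCost hN c x := by
    calc ∑ j, cbar j * x j ≤ ∑ j, (∑ i, c i j) * x j := by
          apply Finset.sum_le_sum
          intro j _
          refine mul_le_mul_of_nonneg_right ?_ (hx0 x hxX j)
          rw [hcbar j]
          apply Finset.sup'_le
          intro i _
          exact Finset.single_le_sum (fun i _ => hc i j) (Finset.mem_univ i)
      _ = ∑ i, ∑ j, c i j * x j := by
          rw [Finset.sum_comm]
          simp [Finset.sum_mul]
      _ ≤ ∑ _i : Fin N, maxCost hN c x := by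
          apply Finset.sum_le_sum
          intro i _
          exact Finset.le_sup' (fun i => ∑ j, c i j * x j) (Finset.mem_univ i)
      _ = (N : ℝ) * maxCost hN c x := by simp [mul_comm]
  calc maxCost hN c xbar ≤ ∑ j, cbar j * xbar j := h1
    _ ≤ ∑ j, cbar j * x j := hmin x hxX
    _ ≤ (N : ℝ) * maxCost hN c x := h2
    _ = (N : ℝ) * X.inf' hXne (fun x => maxCost hN c x) := by rw [hx]
end

section
/- The element-wise worst-case solution is a |X|-approximation, where |X| = max_{x∈X} ∑_{j∈[n]} x_j is the maximum cardinality of a feasible solution: if x̄ minimizes c̄·x over X with c̄_j = max_{i∈[N]} cⁱ_j, then max_{i∈[N]} cⁱ·x̄ ≤ (max_{x∈X} ∑_j x_j) · min_{x∈X} max_{i∈[N]} cⁱ·x. -/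
open Finset

theorem ewwc_card_approx {n N : ℕ} (hN : 0 < N)
    (X : Finset (Fin n → ℝ)) (hXne : X.Nonempty)
    (hX01 : ∀ x ∈ X, ∀ j, x j = 0 ∨ x j = 1)
    (c : Fin N → Fin n → ℝ) (hc : ∀ i j, 0 ≤ c i j)
    (cbar : Fin n → ℝ)
    (hcbar : ∀ j, cbar j = Finset.univ.sup'
      (Finset.univ_nonempty_iff.mpr (Fin.pos_iff_nonempty.mp hN)) (fun i => c i j))
    (xbar : Fin n → ℝ) (hxbarX : xbar ∈ X)
    (hmin : ∀ x ∈ X, ∑ j, cbar j * xbar j ≤ ∑ j, cbar j * x j) :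
    maxCost hN c xbar ≤
      (X.sup' hXne fun x => ∑ j, x j) * X.inf' hXne (fun x => maxCost hN c x) := by
  have hne := Finset.univ_nonempty_iff.mpr (Fin.pos_iff_nonempty.mp hN)
  have hx01 : ∀ y ∈ X, ∀ j, (0:ℝ) ≤ y j ∧ y j ≤ 1 := by
    intro y hy j
    rcases hX01 y hy j with h | h <;> simp [h]
  obtain ⟨x, hxX, hxmin⟩ := X.exists_mem_eq_inf' hXne (fun x => maxCost hN c x)
  rw [hxmin]
  have hmc_nonneg : 0 ≤ maxCost hN c x := by
    obtain ⟨i⟩ := Fin.pos_iff_nonempty.mp hN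
    refine le_trans ?_ (Finset.le_sup' (f := fun i => ∑ j, c i j * x j) (mem_univ i))
    exact Finset.sum_nonneg fun j _ => mul_nonneg (hc i j) (hx01 x hxX j).1
  -- step 1: maxCost xbar ≤ ∑ cbar * xbar
  have h1 : maxCost hN c xbar ≤ ∑ j, cbar j * xbar j := by
    apply Finset.sup'_le
    intro i _
    apply Finset.sum_le_sum
    intro j _
    have : c i j ≤ cbar j := by
      rw [hcbar j]; exact Finset.le_sup' (fun i => c i j) (mem_univ i)
    exact mul_le_mul_of_nonneg_right this (hx01 xbar hxbarX j).1
  -- step 3: ∑ cbar * x ≤ (∑ x) * maxCost x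
  have h3 : ∑ j, cbar j * x j ≤ (∑ j, x j) * maxCost hN c x := by
    rw [Finset.sum_mul]
    apply Finset.sum_le_sum
    intro j _
    rcases hX01 x hxX j with h | h
    · simp [h]
    · rw [h, mul_one, one_mul]
      rw [hcbar j]
      apply Finset.sup'_le
      intro i _
      refine le_trans ?_ (Finset.le_sup' (f := fun i => ∑ k, c i k * x k) (mem_univ i))
      calc c i j = c i j * x j := by rw [h, mul_one]
        _ ≤ ∑ k, c i k * x k :=
          Finset.single_le_sum (f := fun k => c i k * x k)
            (fun k _ => mul_nonneg (hc i k) (hx01 x hxX k).1) (mem_univ j)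
  have h4 : (∑ j, x j) * maxCost hN c x ≤
      (X.sup' hXne fun x => ∑ j, x j) * maxCost hN c x :=
    mul_le_mul_of_nonneg_right
      (Finset.le_sup' (f := fun x => ∑ j, x j) hxX) hmc_nonneg
  exact le_trans h1 (le_trans (hmin x hxX) (le_trans h3 h4))
end

section
/- Suppose a scenario c ∈ ℝⁿ with c ≥ 0 and t ≥ 0 satisfy ∑_{j∈S} cⁱ_j ≤ t ∑_{j∈S} c_j for every i ∈ [N] and every subset S ⊆ [n] with |S| = k, where k ≤ ∑_{j∈[n]} x_j for all x ∈ X. Then for every x ∈ X and every i ∈ [N], cⁱ·x ≤ t · c·x; in particular max_{i∈[N]} cⁱ·x(c) ≤ t · c·x(c) for a minimizer x(c) of c·x over X. -/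
open Finset

lemma count_powersetCard_mem {α : Type*} [DecidableEq α] {S : Finset α} {j : α}
    (hj : j ∈ S) {k : ℕ} (hk : 0 < k) :
    ((S.powersetCard k).filter (fun T => j ∈ T)).card = (S.card - 1).choose (k - 1) := by
  rw [show #S - 1 = #(S.erase j) from (Finset.card_erase_of_mem hj).symm,
    ← Finset.card_powersetCard (k - 1) (S.erase j)]
  refine Finset.card_bij' (fun T _ => T.erase j) (fun T _ => insert j T) ?_ ?_ ?_ ?_
  · intro T hT
    simp only [mem_filter, mem_powersetCard] at hT
    simp only [mem_powersetCard]
    exact ⟨Finset.erase_subset_erase _ hT.1.1,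
      by rw [Finset.card_erase_of_mem hT.2, hT.1.2]⟩
  · intro T hT
    simp only [mem_powersetCard] at hT
    have hjT : j ∉ T := fun h => (Finset.notMem_erase j S) (hT.1 h)
    simp only [mem_filter, mem_powersetCard]
    refine ⟨⟨Finset.insert_subset hj (hT.1.trans (Finset.erase_subset _ _)), ?_⟩,
      Finset.mem_insert_self _ _⟩
    rw [Finset.card_insert_of_notMem hjT, hT.2]
    omega
  · intro T hT
    simp only [mem_filter] at hT
    exact Finset.insert_erase hT.2
  · intro T hT
    simp only [mem_powersetCard] at hT
    have hjT : j ∉ T := fun h => (Finset.notMem_erase j S) (hT.1 h)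
    exact Finset.erase_insert hjT

lemma double_count {α : Type*} [DecidableEq α] (S : Finset α) {k : ℕ} (hk : 0 < k)
    (f : α → ℝ) :
    ∑ T ∈ S.powersetCard k, ∑ j ∈ T, f j
      = ((S.card - 1).choose (k - 1) : ℝ) * ∑ j ∈ S, f j := by
  have : ∀ T ∈ S.powersetCard k, ∑ j ∈ T, f j = ∑ j ∈ S, if j ∈ T then f j else 0 := by
    intro T hT
    rw [Finset.sum_ite_mem, Finset.inter_comm,
      Finset.inter_eq_left.mpr (Finset.mem_powersetCard.mp hT).1]
  rw [Finset.sum_congr rfl this, Finset.sum_comm]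
  rw [Finset.mul_sum]
  refine Finset.sum_congr rfl fun j hj => ?_
  rw [← Finset.sum_filter, Finset.sum_const, count_powersetCard_mem hj hk, nsmul_eq_mul]

lemma key_ineq {n k : ℕ} (hk : 0 < k) (S : Finset (Fin n)) (hS : k ≤ S.card)
    (f g : Fin n → ℝ) (t : ℝ)
    (hcons : ∀ T : Finset (Fin n), T.card = k → ∑ j ∈ T, f j ≤ t * ∑ j ∈ T, g j) :
    ∑ j ∈ S, f j ≤ t * ∑ j ∈ S, g j := by
  have hsum : ∑ T ∈ S.powersetCard k, ∑ j ∈ T, f j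
      ≤ ∑ T ∈ S.powersetCard k, t * ∑ j ∈ T, g j := by
    refine Finset.sum_le_sum fun T hT => ?_
    exact hcons T (Finset.mem_powersetCard.mp hT).2
  rw [double_count S hk f, ← Finset.mul_sum, double_count S hk g] at hsum
  have hpos : 0 < ((S.card - 1).choose (k - 1) : ℝ) := by
    have : 0 < (S.card - 1).choose (k - 1) := Nat.choose_pos (by omega)
    exact_mod_cast this
  have := hsum
  rw [mul_left_comm] at this
  exact le_of_mul_le_mul_left this hpos

theorem subset_constraints_imply {n N k : ℕ} (hN : 0 < N) (hk : 0 < k)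
    (X : Finset (Fin n → ℝ)) (hXne : X.Nonempty)
    (hX01 : ∀ x ∈ X, ∀ j, x j = 0 ∨ x j = 1)
    (hXk : ∀ x ∈ X, (k : ℝ) ≤ ∑ j, x j)
    (cs : Fin N → Fin n → ℝ) (hcs : ∀ i j, 0 ≤ cs i j)
    (c : Fin n → ℝ) (hc : ∀ j, 0 ≤ c j) (t : ℝ) (ht : 0 ≤ t)
    (hcons : ∀ i, ∀ S : Finset (Fin n), S.card = k →
      ∑ j ∈ S, cs i j ≤ t * ∑ j ∈ S, c j)
    (xc : Fin n → ℝ) (hxcX : xc ∈ X)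
    (hxcmin : ∀ x ∈ X, ∑ j, c j * xc j ≤ ∑ j, c j * x j) :
    (∀ x ∈ X, ∀ i, ∑ j, cs i j * x j ≤ t * ∑ j, c j * x j) ∧
      maxCost hN cs xc ≤ t * ∑ j, c j * xc j := by
  have main : ∀ x ∈ X, ∀ i, ∑ j, cs i j * x j ≤ t * ∑ j, c j * x j := by
    intro x hx i
    classical
    set S : Finset (Fin n) := Finset.univ.filter (fun j => x j = 1) with hSdef
    have hrestr : ∀ f : Fin n → ℝ, ∑ j, f j * x j = ∑ j ∈ S, f j := by
      intro f
      rw [hSdef, Finset.sum_filter]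
      refine Finset.sum_congr rfl fun j _ => ?_
      rcases hX01 x hx j with h | h <;> simp [h]
    have hScard : k ≤ S.card := by
      have hsum : ∑ j, x j = (S.card : ℝ) := by
        have : ∑ j, x j = ∑ j, (1 : ℝ) * x j := by simp
        rw [this, hrestr (fun _ => (1:ℝ))]
        simp
      have := hXk x hx
      rw [hsum] at this
      exact_mod_cast this
    rw [hrestr (cs i), hrestr c]
    exact key_ineq hk S hScard (cs i) c t (hcons i)
  refine ⟨main, ?_⟩
  rw [maxCost]
  apply Finset.sup'_le
  intro i _
  exact main xc hxcX i
end

section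
/- If (t*, c*, λ*) is a feasible solution of the LP: maximize t subject to t·∑_{j∈S} cⁱ_j ≤ ∑_{j∈S} c_j for all i∈[N] and all S ⊆ [n] with |S| = k, c = ∑_i λ_i cⁱ, ∑_i λ_i = 1, λ ≥ 0, where every x ∈ X has at least k ones and t* > 0, then any minimizer x(c*) of c*·x over X satisfies max_{i∈[N]} cⁱ·x(c*) ≤ (1/t*) · min_{x∈X} max_{i∈[N]} cⁱ·x. -/
/-!
Let `S` be the support of the minimizer `x(c*)`; it has at least `k` elements. Leaving out one
element of `S` at a time, the LP constraints on the `k`-subsets of `S` add up to the constraint on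
`S` itself, i.e. `t* · cⁱ·x(c*) ≤ c*·x(c*)` for every scenario `i`. Since `x(c*)` minimizes
`c*·x` over `X`, and `c*·x` is a convex combination of the `cⁱ·x`, hence at most `maxᵢ cⁱ·x`,
we get `t* · cⁱ·x(c*) ≤ maxᵢ cⁱ·x` for every `x ∈ X`.
-/

open Finset

namespace Finset

variable {α M : Type*} [DecidableEq α]

theorem sum_sum_erase [AddCommMonoid M] (s : Finset α) (f : α → M) :
    ∑ a ∈ s, ∑ j ∈ s.erase a, f j = (#s - 1) • ∑ j ∈ s, f j := by
  rw [sum_comm' (t' := s) (s' := fun j => s.erase j), smul_sum]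
  · refine sum_congr rfl fun j hj => ?_
    rw [sum_const, card_erase_of_mem hj]
  · intro a j
    simp only [mem_erase, ne_comm]
    tauto

theorem sum_le_sum_of_forall_card_eq [AddCommMonoid M] [LinearOrder M]
    [IsOrderedCancelAddMonoid M] {k : ℕ} (hk : 0 < k) {f g : α → M} {s : Finset α}
    (hs : k ≤ #s) (h : ∀ t ⊆ s, #t = k → ∑ j ∈ t, f j ≤ ∑ j ∈ t, g j) :
    ∑ j ∈ s, f j ≤ ∑ j ∈ s, g j := by
  suffices ∀ m s, #s = k + m → (∀ t ⊆ s, #t = k → ∑ j ∈ t, f j ≤ ∑ j ∈ t, g j) →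
      ∑ j ∈ s, f j ≤ ∑ j ∈ s, g j from
    this _ s (Nat.add_sub_of_le hs).symm h
  intro m
  induction m with
  | zero => exact fun s hs h => h s Subset.rfl hs
  | succ m ih =>
    intro s hs h
    have herase : ∀ a ∈ s, ∑ j ∈ s.erase a, f j ≤ ∑ j ∈ s.erase a, g j := fun a ha =>
      ih _ (by rw [card_erase_of_mem ha, hs]; omega)
        fun t ht => h t (ht.trans (erase_subset a s))
    have hsum := sum_le_sum herase
    rw [sum_sum_erase, sum_sum_erase] at hsum
    exact le_of_nsmul_le_nsmul_right (by omega) hsum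

end Finset

theorem sum_mul_eq_sum_filter_eq_one {ι R : Type*} [Fintype ι] [Semiring R] [Nontrivial R]
    [DecidableEq R] {x : ι → R} (hx : ∀ j, x j = 0 ∨ x j = 1) (g : ι → R) :
    ∑ j, g j * x j = ∑ j with x j = 1, g j := by
  rw [sum_filter]
  refine sum_congr rfl fun j _ => ?_
  rcases hx j with h | h <;> simp [h]

theorem sum_eq_card_filter_eq_one {ι R : Type*} [Fintype ι] [Semiring R] [Nontrivial R]
    [DecidableEq R] {x : ι → R} (hx : ∀ j, x j = 0 ∨ x j = 1) :
    ∑ j, x j = #{j | x j = 1} := by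
  simpa using sum_mul_eq_sum_filter_eq_one hx 1

theorem convexCombination_cost_le_maxCost {n N : ℕ} (hN : 0 < N) (cs : Fin N → Fin n → ℝ)
    {lam : Fin N → ℝ} (hlam : ∀ i, 0 ≤ lam i) (hlamsum : ∑ i, lam i = 1)
    (x : Fin n → ℝ) : ∑ j, (∑ i, lam i * cs i j) * x j ≤ maxCost hN cs x := by
  have hcomb : ∑ j, (∑ i, lam i * cs i j) * x j = ∑ i, lam i * ∑ j, cs i j * x j := by
    simp only [sum_mul, mul_sum, mul_assoc]
    exact sum_comm
  calc ∑ j, (∑ i, lam i * cs i j) * x j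
      = univ.centerMass lam fun i => ∑ j, cs i j * x j := by
        rw [hcomb, centerMass, hlamsum, inv_one, one_smul]
        rfl
    _ ≤ maxCost hN cs x := centerMass_le_sup (fun i _ => hlam i) (hlamsum ▸ one_pos)

theorem LP_feasible_approx_general {n N k : ℕ} (hN : 0 < N) (hk : 0 < k)
    (X : Finset (Fin n → ℝ)) (hXne : X.Nonempty)
    (hX01 : ∀ x ∈ X, ∀ j, x j = 0 ∨ x j = 1)
    (hXk : ∀ x ∈ X, (k : ℝ) ≤ ∑ j, x j)
    (cs : Fin N → Fin n → ℝ)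
    (tstar : ℝ) (htstar : 0 < tstar)
    (cstar : Fin n → ℝ) (lam : Fin N → ℝ)
    (hlam : ∀ i, 0 ≤ lam i) (hlamsum : ∑ i, lam i = 1)
    (hcstar : ∀ j, cstar j = ∑ i, lam i * cs i j)
    (hcons : ∀ i, ∀ S : Finset (Fin n), S.card = k →
      tstar * ∑ j ∈ S, cs i j ≤ ∑ j ∈ S, cstar j)
    (xc : Fin n → ℝ) (hxcX : xc ∈ X)
    (hxcmin : ∀ x ∈ X, ∑ j, cstar j * xc j ≤ ∑ j, cstar j * x j) :
    maxCost hN cs xc ≤ (1 / tstar) * X.inf' hXne (fun x => maxCost hN cs x) := by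
  have hxc01 := hX01 xc hxcX
  have hk_le_support : k ≤ #{j | xc j = 1} := by
    exact_mod_cast (sum_eq_card_filter_eq_one hxc01).symm ▸ hXk xc hxcX
  have hscenario : ∀ i, tstar * ∑ j, cs i j * xc j ≤ ∑ j, cstar j * xc j := fun i => by
    rw [sum_mul_eq_sum_filter_eq_one hxc01, sum_mul_eq_sum_filter_eq_one hxc01, mul_sum]
    exact sum_le_sum_of_forall_card_eq hk hk_le_support fun t _ ht => by
      rw [← mul_sum]; exact hcons i t ht
  have hcstar_le : ∀ x, ∑ j, cstar j * x j ≤ maxCost hN cs x := fun x => by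
    simpa only [hcstar] using convexCombination_cost_le_maxCost hN cs hlam hlamsum x
  rw [one_div, inv_mul_eq_div]
  refine sup'_le _ _ fun i _ => (le_div_iff₀' htstar).2 (le_inf' _ _ fun x hx => ?_)
  exact (hscenario i).trans ((hxcmin x hx).trans (hcstar_le x))

theorem LP_feasible_approx {n N k : ℕ} (hN : 0 < N) (hk : 0 < k)
    (X : Finset (Fin n → ℝ)) (hXne : X.Nonempty)
    (hX01 : ∀ x ∈ X, ∀ j, x j = 0 ∨ x j = 1)
    (hXk : ∀ x ∈ X, (k : ℝ) ≤ ∑ j, x j)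
    (cs : Fin N → Fin n → ℝ) (hcs : ∀ i j, 0 ≤ cs i j)
    (tstar : ℝ) (htstar : 0 < tstar)
    (cstar : Fin n → ℝ) (lam : Fin N → ℝ)
    (hlam : ∀ i, 0 ≤ lam i) (hlamsum : ∑ i, lam i = 1)
    (hcstar : ∀ j, cstar j = ∑ i, lam i * cs i j)
    (hcons : ∀ i, ∀ S : Finset (Fin n), S.card = k →
      tstar * ∑ j ∈ S, cs i j ≤ ∑ j ∈ S, cstar j)
    (xc : Fin n → ℝ) (hxcX : xc ∈ X)
    (hxcmin : ∀ x ∈ X, ∑ j, cstar j * xc j ≤ ∑ j, cstar j * x j) :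
    maxCost hN cs xc ≤ (1 / tstar) * X.inf' hXne (fun x => maxCost hN cs x) :=
  LP_feasible_approx_general hN hk X hXne hX01 hXk cs tstar htstar cstar lam hlam hlamsum hcstar
    hcons xc hxcX hxcmin
end

section
/- The N-approximation guarantee for the midpoint method is tight for N = 2: for every ε > 0 there exist an instance with a feasible set X ⊆ {0,1}ⁿ and N = 2 nonnegative scenarios c¹, c² ≥ 0, together with a midpoint-optimal solution x̂ (i.e., a minimizer of ĉ·x over X, where ĉ is the midpoint scenario), such that max_{i∈[2]} cⁱ·x̂ > (2 − ε)·OPT, where OPT = min_{x∈X} max_{i∈[2]} cⁱ·x. -/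
open Finset

/-- The `N`-approximation guarantee for the midpoint method is tight for `N = 2`:
for every `ε > 0` there is an instance with two nonnegative scenarios and a
midpoint-optimal solution whose robust value exceeds `(2 - ε)` times the optimum. -/
theorem midpoint_tight_two_scenarios :
    ∀ ε : ℝ, 0 < ε →
      ∃ (n : ℕ) (X : Finset (Fin n → ℝ)) (hXne : X.Nonempty)
        (c : Fin 2 → Fin n → ℝ) (xhat : Fin n → ℝ),
        (∀ x ∈ X, ∀ j, x j = 0 ∨ x j = 1) ∧
        (∀ i j, 0 ≤ c i j) ∧
        xhat ∈ X ∧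
        (∀ x ∈ X, ∑ j, ((1 / 2 : ℝ) * (c 0 j + c 1 j)) * xhat j ≤
          ∑ j, ((1 / 2 : ℝ) * (c 0 j + c 1 j)) * x j) ∧
        (2 - ε) * X.inf' hXne
            (fun x => max (∑ j, c 0 j * x j) (∑ j, c 1 j * x j)) <
          max (∑ j, c 0 j * xhat j) (∑ j, c 1 j * xhat j) := by
  intro ε hε
  refine ⟨2, {![(1:ℝ),0], ![0,1]}, ⟨![(1:ℝ),0], by simp⟩,
    ![![(1:ℝ),2], ![(1:ℝ),0]], ![0,1], ?_, ?_, ?_, ?_, ?_⟩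
  · intro x hx j
    simp only [mem_insert, mem_singleton] at hx
    rcases hx with rfl | rfl <;> fin_cases j <;> simp
  · intro i j; fin_cases i <;> fin_cases j <;> norm_num
  · simp
  · intro x hx
    simp only [mem_insert, mem_singleton] at hx
    rcases hx with rfl | rfl <;> simp [Fin.sum_univ_two] <;> norm_num
  · have h : ({![(1:ℝ),0], ![0,1]} : Finset (Fin 2 → ℝ)).inf'
        ⟨![(1:ℝ),0], by simp⟩
        (fun x => max (∑ j, ![![(1:ℝ),2], ![(1:ℝ),0]] 0 j * x j)
          (∑ j, ![![(1:ℝ),2], ![(1:ℝ),0]] 1 j * x j)) = 1 := by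
      rw [inf'_insert, inf'_singleton]
      simp [Fin.sum_univ_two]
      exact singleton_nonempty _
    rw [h]
    simp [Fin.sum_univ_two]
    linarith
end

section
/- If c ∈ ℝⁿ and t > 0 satisfy cⁱ_j ≤ t·c_j for all i ∈ [N] and j ∈ [n] (the k = 1 constraints), and c ∈ conv{c¹,…,c^N}, then any minimizer x(c) of c·x over X satisfies max_{i∈[N]} cⁱ·x(c) ≤ t·OPT, where OPT = min_{x∈X} max_{i∈[N]} cⁱ·x. -/
open Finset

theorem k_one_constraints_approx {n N : ℕ} (hN : 0 < N)
    (X : Finset (Fin n → ℝ)) (hXne : X.Nonempty)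
    (hX01 : ∀ x ∈ X, ∀ j, x j = 0 ∨ x j = 1)
    (hXnz : ∀ x ∈ X, x ≠ 0)
    (cs : Fin N → Fin n → ℝ) (hcs : ∀ i j, 0 ≤ cs i j)
    (c : Fin n → ℝ) (t : ℝ) (ht : 0 < t)
    (hcons : ∀ i j, cs i j ≤ t * c j)
    (hconv : c ∈ convexHull ℝ (Set.range cs))
    (xc : Fin n → ℝ) (hxcX : xc ∈ X)
    (hxcmin : ∀ x ∈ X, ∑ j, c j * xc j ≤ ∑ j, c j * x j) :
    maxCost hN cs xc ≤ t * X.inf' hXne (fun x => maxCost hN cs x) := by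
  obtain ⟨xs, hxsX, hxs⟩ := X.exists_mem_eq_inf' hXne (fun x => maxCost hN cs x)
  rw [hxs]
  have hxc0 : ∀ j, 0 ≤ xc j := fun j => by
    rcases hX01 xc hxcX j with h | h <;> simp [h]
  -- step 1 : maxCost cs xc ≤ t * c·xc
  have h1 : maxCost hN cs xc ≤ t * ∑ j, c j * xc j := by
    apply Finset.sup'_le
    intro i _
    rw [Finset.mul_sum]
    apply Finset.sum_le_sum
    intro j _
    calc cs i j * xc j ≤ (t * c j) * xc j :=
          mul_le_mul_of_nonneg_right (hcons i j) (hxc0 j)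
      _ = t * (c j * xc j) := by ring
  -- step 2 : c·xc ≤ c·xs
  have h2 : ∑ j, c j * xc j ≤ ∑ j, c j * xs j := hxcmin xs hxsX
  -- step 3 : c·xs ≤ maxCost cs xs
  have h3 : ∑ j, c j * xs j ≤ maxCost hN cs xs := by
    have hlin : IsLinearMap ℝ (fun d : Fin n → ℝ => ∑ j, d j * xs j) := by
      constructor
      · intro a b
        simp [add_mul, Finset.sum_add_distrib]
      · intro r a
        simp [Finset.mul_sum, mul_assoc]
    have hsub : Set.range cs ⊆ {d : Fin n → ℝ | ∑ j, d j * xs j ≤ maxCost hN cs xs} := by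
      rintro _ ⟨i, rfl⟩
      exact Finset.le_sup' (fun i => ∑ j, cs i j * xs j) (Finset.mem_univ i)
    exact convexHull_min hsub (convex_halfSpace_le hlin _) hconv
  calc maxCost hN cs xc ≤ t * ∑ j, c j * xc j := h1
    _ ≤ t * ∑ j, c j * xs j := by linarith [mul_le_mul_of_nonneg_left h2 ht.le]
    _ ≤ t * maxCost hN cs xs := mul_le_mul_of_nonneg_left h3 ht.le
end

section
/- The guarantee of Theorem on |X|-approximation can strictly beat the N-guarantee: if every x ∈ X satisfies ∑_j x_j ≤ m and m < N, then the element-wise worst-case solution x̄ satisfies max_{i∈[N]} cⁱ·x̄ ≤ m·OPT ≤ N·OPT, i.e., the element-wise worst-case approach is a min(N, m)-approximation. -/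
open Finset

theorem ewwc_min_N_m_approx {n N m : ℕ} (hN : 0 < N) (hm : 0 < m)
    (X : Finset (Fin n → ℝ)) (hXne : X.Nonempty)
    (hX01 : ∀ x ∈ X, ∀ j, x j = 0 ∨ x j = 1)
    (hXm : ∀ x ∈ X, ∑ j, x j ≤ (m : ℝ))
    (cs : Fin N → Fin n → ℝ) (hcs : ∀ i j, 0 ≤ cs i j)
    (cbar : Fin n → ℝ)
    (hcbar : ∀ j, cbar j = Finset.univ.sup'
      (Finset.univ_nonempty_iff.mpr (Fin.pos_iff_nonempty.mp hN)) (fun i => cs i j))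
    (xbar : Fin n → ℝ) (hxbarX : xbar ∈ X)
    (hmin : ∀ x ∈ X, ∑ j, cbar j * xbar j ≤ ∑ j, cbar j * x j) :
    maxCost hN cs xbar ≤
      min (N : ℝ) (m : ℝ) * X.inf' hXne (fun x => maxCost hN cs x) := by
  have hne : (Finset.univ : Finset (Fin N)).Nonempty :=
    Finset.univ_nonempty_iff.mpr (Fin.pos_iff_nonempty.mp hN)
  obtain ⟨x₀, hx₀X, hx₀⟩ := Finset.exists_mem_eq_inf' hXne fun x => maxCost hN cs x
  rw [hx₀]
  set M := maxCost hN cs x₀ with hM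
  have hx₀nn : ∀ j, 0 ≤ x₀ j := fun j => by rcases hX01 x₀ hx₀X j with h | h <;> simp [h]
  have hxbnn : ∀ j, 0 ≤ xbar j := fun j => by rcases hX01 xbar hxbarX j with h | h <;> simp [h]
  -- M is nonneg
  have hMnn : 0 ≤ M := by
    obtain ⟨i⟩ := Fin.pos_iff_nonempty.mp hN
    refine le_trans ?_ (Finset.le_sup' (fun i => ∑ j, cs i j * x₀ j) (Finset.mem_univ i))
    exact Finset.sum_nonneg fun j _ => mul_nonneg (hcs i j) (hx₀nn j)
  -- each problem cost at x₀ is ≤ M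
  have hcostle : ∀ i : Fin N, ∑ j, cs i j * x₀ j ≤ M :=
    fun i => Finset.le_sup' (fun i => ∑ j, cs i j * x₀ j) (Finset.mem_univ i)
  -- Step A: maxCost xbar ≤ ∑ cbar * xbar
  have hA : maxCost hN cs xbar ≤ ∑ j, cbar j * xbar j := by
    apply Finset.sup'_le
    intro i _
    refine Finset.sum_le_sum fun j _ => mul_le_mul_of_nonneg_right ?_ (hxbnn j)
    rw [hcbar j]
    exact Finset.le_sup' (fun i => cs i j) (Finset.mem_univ i)
  have hB : ∑ j, cbar j * xbar j ≤ ∑ j, cbar j * x₀ j := hmin x₀ hx₀X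
  -- Bound by N * M
  have hNM : ∑ j, cbar j * x₀ j ≤ (N : ℝ) * M := by
    have h1 : ∀ j, cbar j * x₀ j ≤ (∑ i, cs i j) * x₀ j := by
      intro j
      refine mul_le_mul_of_nonneg_right ?_ (hx₀nn j)
      rw [hcbar j]
      apply Finset.sup'_le
      intro i _
      exact Finset.single_le_sum (f := fun i => cs i j) (fun i _ => hcs i j)
        (Finset.mem_univ i)
    calc ∑ j, cbar j * x₀ j ≤ ∑ j, (∑ i, cs i j) * x₀ j := Finset.sum_le_sum fun j _ => h1 j
      _ = ∑ i, ∑ j, cs i j * x₀ j := by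
          rw [Finset.sum_comm]
          simp [Finset.sum_mul]
      _ ≤ ∑ _i : Fin N, M := Finset.sum_le_sum fun i _ => hcostle i
      _ = (N : ℝ) * M := by simp [mul_comm]
  -- Bound by m * M
  have hmM : ∑ j, cbar j * x₀ j ≤ (m : ℝ) * M := by
    have h1 : ∀ j, cbar j * x₀ j ≤ M * x₀ j := by
      intro j
      rcases hX01 x₀ hx₀X j with h | h
      · simp [h]
      · refine mul_le_mul_of_nonneg_right ?_ (hx₀nn j)
        rw [hcbar j]
        apply Finset.sup'_le
        intro i _
        calc cs i j = cs i j * x₀ j := by rw [h, mul_one]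
          _ ≤ ∑ k, cs i k * x₀ k :=
            Finset.single_le_sum (f := fun k => cs i k * x₀ k)
              (fun k _ => mul_nonneg (hcs i k) (hx₀nn k)) (Finset.mem_univ j)
          _ ≤ M := hcostle i
    calc ∑ j, cbar j * x₀ j ≤ ∑ j, M * x₀ j := Finset.sum_le_sum fun j _ => h1 j
      _ = M * ∑ j, x₀ j := by rw [Finset.mul_sum]
      _ ≤ M * (m : ℝ) := mul_le_mul_of_nonneg_left (hXm x₀ hx₀X) hMnn
      _ = (m : ℝ) * M := mul_comm _ _
  rw [min_mul_of_nonneg _ _ hMnn]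
  exact le_min (hA.trans (hB.trans hNM)) (hA.trans (hB.trans hmM))
end
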